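/- For a system f on a finite lattice P and an element a ∈ P, f(a) is the least fixed point of the system f + free(a), where free(a) is the map x ↦ x ∨ a. -/

import Mathlib

def IsSystem {P : Type*} [Lattice P] (f : P → P) : Prop :=
  (∀ a, a ≤ f a) ∧ Monotone f ∧ ∀ a, f (f a) = f a

namespace IsSystem

variable {P : Type*} [Lattice P] {f : P → P}

theorem le_apply (hf : IsSystem f) (x : P) : x ≤ f x := hf.1 x

theorem monotone (hf : IsSystem f) : Monotone f := hf.2.1

theorem apply_apply (hf : IsSystem f) (x : P) : f (f x) = f x := hf.2.2 x

theorem apply_sup_eq_of_le {a x : P} (hf : IsSystem f) (h : a ≤ f x) : f (f x ⊔ a) = f x := by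
  rw [sup_eq_left.mpr h, hf.apply_apply]

/-- The join `f + free a` in the lattice of systems. -/
theorem comp_sup_const (hf : IsSystem f) (a : P) : IsSystem fun x ↦ f (x ⊔ a) :=
  ⟨fun _ ↦ le_sup_left.trans (hf.le_apply _),
    fun _ _ hxy ↦ hf.monotone (sup_le_sup_right hxy a),
    fun _ ↦ hf.apply_sup_eq_of_le (le_sup_right.trans (hf.le_apply _))⟩

end IsSystem

theorem stmt16_general {P : Type*} [Lattice P] {f : P → P}
    (hf : IsSystem f) (a : P) {j : P → P} (hj : IsSystem j)
    (hjf : ∀ x, f x ≤ j x) (hja : ∀ x, x ⊔ a ≤ j x)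
    (hle : ∀ k : P → P, IsSystem k → (∀ x, f x ≤ k x) → (∀ x, x ⊔ a ≤ k x) →
      ∀ x, j x ≤ k x) :
    IsLeast {p | j p = p} (f a) := by
  have hj_le : ∀ x, j x ≤ f (x ⊔ a) :=
    hle _ (hf.comp_sup_const a) (fun _ ↦ hf.monotone le_sup_left) (fun _ ↦ hf.le_apply _)
  refine ⟨le_antisymm ?_ (hj.le_apply _), fun p (hp : j p = p) ↦ ?_⟩
  · calc j (f a) ≤ f (f a ⊔ a) := hj_le _
      _ = f a := hf.apply_sup_eq_of_le (hf.le_apply a)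
  · have hap : a ≤ p := le_sup_right.trans ((hja p).trans hp.le)
    exact (hf.monotone hap).trans ((hjf p).trans hp.le)

theorem stmt16 {P : Type*} [Lattice P] [Fintype P] {f : P → P}
    (hf : IsSystem f) (a : P) {j : P → P} (hj : IsSystem j)
    (hjf : ∀ x, f x ≤ j x) (hja : ∀ x, x ⊔ a ≤ j x)
    (hle : ∀ k : P → P, IsSystem k → (∀ x, f x ≤ k x) → (∀ x, x ⊔ a ≤ k x) →
      ∀ x, j x ≤ k x) :
    IsLeast {p | j p = p} (f a) :=
  stmt16_general hf a hj hjf hja hle
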